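/- (Global nonlinear flux–entropy interaction estimate.) Suppose f, η ∈ C¹(ℝ) satisfy f′(v) − f′(w) ≥ C_f (v−w)^{p_f} and η′(v) − η′(w) ≥ C_η (v−w)^{p_η} for all w < v, with constants C_f, C_η > 0 and exponents p_f, p_η ≥ 1. Let q be a C¹ function with q′ = η′ f′. Then for all v, w ∈ ℝ: (w−v)(q(w)−q(v)) − (η(w)−η(v))(f(w)−f(v)) ≥ C_{f,η} |w−v|^{p_f + p_η + 2}, where C_{f,η} = C_f C_η / ((1+p_f+p_η)(2+p_f+p_η)). -/

import Mathlib

open intervalIntegral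

private lemma int_pow_sub_left {r v x : ℝ} (hr : 0 ≤ r) :
    ∫ t in v..x, (x - t) ^ r = (x - v) ^ (r + 1) / (r + 1) := by
  rw [intervalIntegral.integral_comp_sub_left (fun u => u ^ r) x]
  rw [sub_self, integral_rpow (Or.inl (by linarith : (-1:ℝ) < r)),
    Real.zero_rpow (by positivity : r + 1 ≠ 0), sub_zero]

private lemma int_pow_sub_right {r v x : ℝ} (hr : 0 ≤ r) :
    ∫ t in v..x, (t - v) ^ r = (x - v) ^ (r + 1) / (r + 1) := by
  rw [intervalIntegral.integral_comp_sub_right (fun u => u ^ r) v]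
  rw [sub_self, integral_rpow (Or.inl (by linarith : (-1:ℝ) < r)),
    Real.zero_rpow (by positivity : r + 1 ≠ 0), sub_zero]

private lemma key_estimate (f η q : ℝ → ℝ) (Cf Cη pf pη : ℝ)
    (hf : ContDiff ℝ 1 f) (hη : ContDiff ℝ 1 η) (hq : ContDiff ℝ 1 q)
    (hCf : 0 < Cf) (hCη : 0 < Cη) (hpf : 1 ≤ pf) (hpη : 1 ≤ pη)
    (hfmono : ∀ w v : ℝ, w < v → Cf * (v - w) ^ pf ≤ deriv f v - deriv f w)
    (hηmono : ∀ w v : ℝ, w < v → Cη * (v - w) ^ pη ≤ deriv η v - deriv η w)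
    (hq' : ∀ x, deriv q x = deriv η x * deriv f x)
    (v w : ℝ) (hvw : v < w) :
    (Cf * Cη / ((1 + pf + pη) * (2 + pf + pη))) * (w - v) ^ (pf + pη + 2) ≤
      (w - v) * (q w - q v) - (η w - η v) * (f w - f v) := by
  have hfd : Differentiable ℝ f := hf.differentiable one_ne_zero
  have hηd : Differentiable ℝ η := hη.differentiable one_ne_zero
  have hqd : Differentiable ℝ q := hq.differentiable one_ne_zero
  have hf'c : Continuous (deriv f) := hf.continuous_deriv le_rfl
  have hη'c : Continuous (deriv η) := hη.continuous_deriv le_rfl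
  have hq'c : Continuous (deriv q) := hq.continuous_deriv le_rfl
  set p := pf + pη with hp
  have hp2 : (2 : ℝ) ≤ p := by simp only [hp]; linarith
  have hp0 : 0 ≤ p := by linarith
  set E : ℝ → ℝ := fun x =>
    (q x - q v) + (x - v) * (deriv η x * deriv f x)
      - deriv η x * (f x - f v) - (η x - η v) * deriv f x with hE
  -- F has derivative E
  have hF : ∀ x : ℝ, HasDerivAt
      (fun y => (y - v) * (q y - q v) - (η y - η v) * (f y - f v)) (E x) x := by
    intro x
    have h1 : HasDerivAt (fun y => (y - v) * (q y - q v))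
        (1 * (q x - q v) + (x - v) * deriv q x) x :=
      (((hasDerivAt_id x).sub_const v).mul (((hqd x).hasDerivAt).sub_const (q v)))
    have h2 : HasDerivAt (fun y => (η y - η v) * (f y - f v))
        (deriv η x * (f x - f v) + (η x - η v) * deriv f x) x :=
      ((((hηd x).hasDerivAt).sub_const (η v)).mul (((hfd x).hasDerivAt).sub_const (f v)))
    have := h1.sub h2
    refine this.congr_deriv ?_
    rw [hq' x]; simp only [hE]; ring
  -- E equals the integral representation
  have hEint : ∀ x : ℝ, E x =
      ∫ t in v..x, (deriv η x - deriv η t) * (deriv f x - deriv f t) := by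
    intro x
    have hif : IntervalIntegrable (deriv f) MeasureTheory.volume v x :=
      hf'c.intervalIntegrable v x
    have hiη : IntervalIntegrable (deriv η) MeasureTheory.volume v x :=
      hη'c.intervalIntegrable v x
    have hiηf : IntervalIntegrable (fun t => deriv η t * deriv f t)
        MeasureTheory.volume v x := (hη'c.mul hf'c).intervalIntegrable v x
    have hqint : q x - q v = ∫ t in v..x, deriv η t * deriv f t := by
      have h0 : q x - q v = ∫ t in v..x, deriv q t :=
        (intervalIntegral.integral_deriv_eq_sub (fun t _ => hqd t)
          (hq'c.intervalIntegrable v x)).symm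
      rw [h0]
      exact intervalIntegral.integral_congr (fun t _ => hq' t)
    have hfint : f x - f v = ∫ t in v..x, deriv f t :=
      (intervalIntegral.integral_deriv_eq_sub (fun t _ => hfd t) hif).symm
    have hηint : η x - η v = ∫ t in v..x, deriv η t :=
      (intervalIntegral.integral_deriv_eq_sub (fun t _ => hηd t) hiη).symm
    have expand : ∀ t : ℝ, (deriv η x - deriv η t) * (deriv f x - deriv f t)
        = deriv η t * deriv f t + (deriv η x * deriv f x
          - deriv η x * deriv f t - deriv f x * deriv η t) := by intro t; ring
    rw [intervalIntegral.integral_congr (fun t _ => expand t)]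
    rw [intervalIntegral.integral_add hiηf
      (((intervalIntegrable_const.sub (hif.const_mul _)).sub (hiη.const_mul _)))]
    rw [intervalIntegral.integral_sub (intervalIntegrable_const.sub (hif.const_mul _))
      (hiη.const_mul _)]
    rw [intervalIntegral.integral_sub intervalIntegrable_const (hif.const_mul _)]
    rw [intervalIntegral.integral_const, intervalIntegral.integral_const_mul,
      intervalIntegral.integral_const_mul]
    simp only [hE, smul_eq_mul]
    rw [hqint, hfint, hηint]; ring
  -- pointwise lower bound on E on [v,w]
  have hElow : ∀ x ∈ Set.Icc v w,
      Cf * Cη * ((x - v) ^ (p + 1) / (p + 1)) ≤ E x := by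
    intro x hx
    obtain ⟨hvx, _⟩ := hx
    rw [hEint x]
    have hpt : ∀ t ∈ Set.Icc v x,
        Cf * Cη * (x - t) ^ p ≤ (deriv η x - deriv η t) * (deriv f x - deriv f t) := by
      intro t ht
      rcases eq_or_lt_of_le ht.2 with heq | hlt
      · rw [heq, sub_self, Real.zero_rpow (by positivity : p ≠ 0), sub_self]
        simp
      · have hxt : 0 < x - t := sub_pos.2 hlt
        have h1 := hfmono t x hlt
        have h2 := hηmono t x hlt
        have hb1 : 0 < Cf * (x - t) ^ pf := by positivity
        have hb2 : 0 < Cη * (x - t) ^ pη := by positivity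
        have heqp : Cf * Cη * (x - t) ^ p
            = (Cη * (x - t) ^ pη) * (Cf * (x - t) ^ pf) := by
          rw [hp, Real.rpow_add hxt]; ring
        rw [heqp]
        exact mul_le_mul h2 h1 hb1.le (le_trans hb2.le h2)
    have hclow : Continuous (fun t => Cf * Cη * (x - t) ^ p) :=
      continuous_const.mul ((continuous_const.sub continuous_id).rpow_const
        (fun t => Or.inr hp0))
    have hmono := intervalIntegral.integral_mono_on hvx
      (hclow.intervalIntegrable (μ := MeasureTheory.volume) v x)
      (((continuous_const.sub hη'c).mul (continuous_const.sub hf'c)).intervalIntegrable (μ := MeasureTheory.volume) v x)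
      hpt
    refine le_trans (le_of_eq ?_) hmono
    rw [intervalIntegral.integral_const_mul, int_pow_sub_left hp0]
  -- integrate E from v to w
  have hFw : (w - v) * (q w - q v) - (η w - η v) * (f w - f v)
      = ∫ x in v..w, E x := by
    have hEc : Continuous E := by
      simp only [hE]
      exact (((hq.continuous.sub continuous_const).add
        (((continuous_id.sub continuous_const)).mul (hη'c.mul hf'c))).sub
        (hη'c.mul (hf.continuous.sub continuous_const))).sub
        ((hη.continuous.sub continuous_const).mul hf'c)
    have := intervalIntegral.integral_eq_sub_of_hasDerivAt
      (f := fun y => (y - v) * (q y - q v) - (η y - η v) * (f y - f v))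
      (fun x _ => hF x) (hEc.intervalIntegrable v w)
    rw [this]; ring
  rw [hFw]
  have hclow2 : Continuous (fun x : ℝ => Cf * Cη * ((x - v) ^ (p + 1) / (p + 1))) := by
    apply continuous_const.mul
    exact ((continuous_id.sub continuous_const).rpow_const
      (fun t => Or.inr (by linarith))).div_const _
  have hEc : Continuous E := by
    simp only [hE]
    exact (((hq.continuous.sub continuous_const).add
      (((continuous_id.sub continuous_const)).mul (hη'c.mul hf'c))).sub
      (hη'c.mul (hf.continuous.sub continuous_const))).sub
      ((hη.continuous.sub continuous_const).mul hf'c)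
  have hmono2 := intervalIntegral.integral_mono_on hvw.le
    (hclow2.intervalIntegrable (μ := MeasureTheory.volume) v w) (hEc.intervalIntegrable (μ := MeasureTheory.volume) v w) hElow
  refine le_trans (le_of_eq ?_) hmono2
  rw [show (fun x : ℝ => Cf * Cη * ((x - v) ^ (p + 1) / (p + 1)))
      = fun x : ℝ => (Cf * Cη / (p + 1)) * (x - v) ^ (p + 1) by funext x; ring]
  rw [intervalIntegral.integral_const_mul, int_pow_sub_right (by linarith : (0:ℝ) ≤ p + 1)]
  rw [show p + 1 + 1 = p + 2 by ring]
  have h1 : (0:ℝ) < p + 1 := by linarith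
  have h2 : (0:ℝ) < p + 2 := by linarith
  have h3 : (1:ℝ) + pf + pη = p + 1 := by rw [hp]; ring
  have h4 : (2:ℝ) + pf + pη = p + 2 := by rw [hp]; ring
  rw [h3, h4, show pf + pη + 2 = p + 2 by rw [hp]]
  field_simp

/-- Lemma 3.1 (global nonlinear flux–entropy interaction estimate). -/
theorem flux_entropy_interaction (f η q : ℝ → ℝ) (Cf Cη pf pη : ℝ)
    (hf : ContDiff ℝ 1 f) (hη : ContDiff ℝ 1 η) (hq : ContDiff ℝ 1 q)
    (hCf : 0 < Cf) (hCη : 0 < Cη) (hpf : 1 ≤ pf) (hpη : 1 ≤ pη)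
    (hfmono : ∀ w v : ℝ, w < v → Cf * (v - w) ^ pf ≤ deriv f v - deriv f w)
    (hηmono : ∀ w v : ℝ, w < v → Cη * (v - w) ^ pη ≤ deriv η v - deriv η w)
    (hq' : ∀ x, deriv q x = deriv η x * deriv f x) :
    ∀ v w : ℝ,
      (Cf * Cη / ((1 + pf + pη) * (2 + pf + pη))) * |w - v| ^ (pf + pη + 2) ≤
        (w - v) * (q w - q v) - (η w - η v) * (f w - f v) := by
  intro v w
  rcases lt_trichotomy v w with h | h | h
  · rw [abs_of_pos (sub_pos.2 h)]
    exact key_estimate f η q Cf Cη pf pη hf hη hq hCf hCη hpf hpη hfmono hηmono hq' v w h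
  · subst h
    simp [Real.zero_rpow (by positivity : pf + pη + 2 ≠ 0)]
  · have hkey := key_estimate f η q Cf Cη pf pη hf hη hq hCf hCη hpf hpη hfmono hηmono hq' w v h
    have habs : |w - v| = v - w := by rw [abs_sub_comm, abs_of_pos (sub_pos.2 h)]
    rw [habs]
    have hrhs : (w - v) * (q w - q v) - (η w - η v) * (f w - f v)
        = (v - w) * (q v - q w) - (η v - η w) * (f v - f w) := by ring
    rw [hrhs]
    exact hkey
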